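/- arXiv:0802.2745 — 6 statements merged into one kernel-verified Lean document; each statement's English description precedes it below -/
import Mathlib

section
/- Parabolic maximum principle: Let D be a finite connected subgraph of a locally finite graph G and let u : D × [0,T] → ℝ be differentiable in the time parameter with Δu + ∂u/∂t ≤ 0 on int D × [0,T]. Then the maximum of u over D × [0,T] is attained on the parabolic boundary (D × {0}) ∪ (∂D × [0,T]). -/
open Finset Set Filter

/-- The graph Laplacian `Δf(x) = ∑_{y ∼ x} (f(x) - f(y))`. -/
def graphLap {V : Type*} (G : SimpleGraph V) [G.LocallyFinite] (f : V → ℝ) (x : V) : ℝ :=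
  ∑ y ∈ G.neighborFinset x, (f x - f y)

/-- The interior of a finite set of vertices `D`: those vertices of `D` all of whose
neighbors lie in `D`. -/
def interiorVerts {V : Type*} (G : SimpleGraph V) (D : Finset V) : Set V :=
  {x | x ∈ D ∧ ∀ y, G.Adj x y → y ∈ D}

/-- Maximum of a function continuous in time over a finite × compact rectangle. -/
lemma max_on_rect {V : Type*} (D : Finset V) (hD : D.Nonempty)
    {T : ℝ} (hT : 0 ≤ T) (w : V → ℝ → ℝ)
    (hc : ∀ x ∈ D, ContinuousOn (w x) (Icc 0 T)) :
    ∃ x ∈ D, ∃ t ∈ Icc (0:ℝ) T, ∀ y ∈ D, ∀ s ∈ Icc (0:ℝ) T, w y s ≤ w x t := by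
  classical
  have key : ∀ x ∈ D, ∃ t ∈ Icc (0:ℝ) T, ∀ s ∈ Icc (0:ℝ) T, w x s ≤ w x t := by
    intro x hx
    obtain ⟨t, ht, hmax⟩ := isCompact_Icc.exists_isMaxOn ⟨0, left_mem_Icc.2 hT⟩ (hc x hx)
    exact ⟨t, ht, fun s hs => hmax hs⟩
  choose! t ht hmax using key
  obtain ⟨x, hx, hbig⟩ := D.exists_max_image (fun x => w x (t x)) hD
  exact ⟨x, hx, t x, ht x hx, fun y hy s hs => (hmax y hy s hs).trans (hbig y hy)⟩

/-- If `f` attains its maximum over `[0,T]` at an interior-or-right-endpoint time `a > 0`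
and is differentiable at `a`, then `f' ≥ 0`. -/
lemma deriv_nonneg_of_max_left {f : ℝ → ℝ} {f' a T : ℝ}
    (h0 : 0 < a) (haT : a ≤ T)
    (hf : HasDerivAt f f' a)
    (hmax : ∀ s ∈ Icc (0:ℝ) T, f s ≤ f a) : 0 ≤ f' := by
  have h1 : Tendsto (slope f a) (nhdsWithin a (Iio a)) (nhds f') :=
    (hasDerivAt_iff_tendsto_slope.1 hf).mono_left
      (nhdsWithin_mono a (fun x hx => ne_of_lt hx))
  have hev : ∀ᶠ s in nhdsWithin a (Iio a), 0 ≤ slope f a s := by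
    have h2 : ∀ᶠ s in nhdsWithin a (Iio a), 0 < s :=
      eventually_nhdsWithin_of_eventually_nhds (eventually_gt_nhds h0)
    filter_upwards [h2, self_mem_nhdsWithin] with s hs0 hsa
    have hsa' : s < a := hsa
    have hfs : f s ≤ f a := hmax s ⟨le_of_lt hs0, le_of_lt (lt_of_lt_of_le hsa' haT)⟩
    rw [slope_def_field]
    exact div_nonneg_iff.2 (Or.inr ⟨by linarith, by linarith⟩)
  exact ge_of_tendsto h1 hev

/-- **Parabolic maximum principle.** Let `D` be a finite connected subgraph of a locally
finite graph `G`, `0 ≤ T`, and let `u : V → ℝ → ℝ` be differentiable in time (with time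
derivative `u'`) and satisfy `Δu + ∂u/∂t ≤ 0` on `int D × [0,T]`.  Then the maximum of
`u` over `D × [0,T]` is attained at a point of the parabolic boundary
`(D × {0}) ∪ (∂D × [0,T])`. -/
theorem parabolic_max_principle {V : Type*} (G : SimpleGraph V) [G.LocallyFinite]
    (D : Finset V) (hD : D.Nonempty)
    (hconn : ((G.induce (↑D : Set V))).Connected)
    (T : ℝ) (hT : 0 ≤ T)
    (u : V → ℝ → ℝ) (u' : V → ℝ → ℝ)
    (hdiff : ∀ x ∈ D, ∀ t ∈ Icc (0 : ℝ) T, HasDerivAt (u x) (u' x t) t)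
    (hineq : ∀ x ∈ interiorVerts G D, ∀ t ∈ Icc (0 : ℝ) T,
      graphLap G (fun v => u v t) x + u' x t ≤ 0) :
    ∃ x ∈ D, ∃ t ∈ Icc (0 : ℝ) T,
      (t = 0 ∨ x ∉ interiorVerts G D) ∧
      ∀ y ∈ D, ∀ s ∈ Icc (0 : ℝ) T, u y s ≤ u x t := by
  classical
  -- continuity of u x on [0,T]
  have hcont : ∀ x ∈ D, ContinuousOn (u x) (Icc 0 T) := fun x hx t ht =>
    (hdiff x hx t ht).continuousAt.continuousWithinAt
  -- the boundary max: maximize w' where interior vertices are frozen at time 0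
  set w' : V → ℝ → ℝ := fun x t => if x ∈ interiorVerts G D then u x 0 else u x t with hw'
  have hw'c : ∀ x ∈ D, ContinuousOn (w' x) (Icc 0 T) := by
    intro x hx
    by_cases h : x ∈ interiorVerts G D <;> simp [hw', h]
    · exact continuousOn_const
    · exact hcont x hx
  obtain ⟨x₁, hx₁, t₁, ht₁, hb⟩ := max_on_rect D hD hT w' hw'c
  set t' : ℝ := if x₁ ∈ interiorVerts G D then 0 else t₁ with ht'
  have ht'mem : t' ∈ Icc (0:ℝ) T := by
    by_cases h : x₁ ∈ interiorVerts G D <;> simp [ht', h]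
    · exact hT
    · exact ht₁
  have hpb' : t' = 0 ∨ x₁ ∉ interiorVerts G D := by
    by_cases h : x₁ ∈ interiorVerts G D <;> simp [ht', h]
  have hval : u x₁ t' = w' x₁ t₁ := by
    by_cases h : x₁ ∈ interiorVerts G D <;> simp [ht', hw', h]
  -- boundary domination
  have hbdry : ∀ y ∈ D, ∀ s ∈ Icc (0:ℝ) T, (s = 0 ∨ y ∉ interiorVerts G D) →
      u y s ≤ u x₁ t' := by
    intro y hy s hs hcase
    have : u y s = w' y s ∨ (s = 0 ∧ u y s = w' y 0) := by
      rcases hcase with h | h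
      · subst h
        by_cases hmem : y ∈ interiorVerts G D <;> simp [hw', hmem]
      · left; simp [hw', h]
    rcases this with h | ⟨hs0, h⟩
    · rw [h, hval]; exact hb y hy s hs
    · rw [h, hval]; exact hb y hy 0 (left_mem_Icc.2 hT)
  refine ⟨x₁, hx₁, t', ht'mem, hpb', ?_⟩
  -- final bound via perturbation
  intro y hy s hs
  by_contra hlt
  push_neg at hlt
  set δ := u y s - u x₁ t' with hδ
  have hδpos : 0 < δ := sub_pos.2 hlt
  set ε := δ / (T + 1) with hε
  have hεpos : 0 < ε := div_pos hδpos (by linarith)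
  -- maximize v = u - ε t
  set v : V → ℝ → ℝ := fun x t => u x t - ε * t with hv
  have hvc : ∀ x ∈ D, ContinuousOn (v x) (Icc 0 T) := fun x hx =>
    (hcont x hx).sub (continuous_const.mul continuous_id).continuousOn
  obtain ⟨x₀, hx₀, t₀, ht₀, hv0⟩ := max_on_rect D hD hT v hvc
  -- the v-maximizer is on the parabolic boundary
  have hpb : t₀ = 0 ∨ x₀ ∉ interiorVerts G D := by
    by_contra hcon
    push_neg at hcon
    obtain ⟨ht₀0, hint⟩ := hcon
    have ht₀pos : 0 < t₀ := lt_of_le_of_ne ht₀.1 (Ne.symm ht₀0)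
    -- Laplacian is nonnegative at the maximizer
    have hlap : 0 ≤ graphLap G (fun z => u z t₀) x₀ := by
      apply Finset.sum_nonneg
      intro z hz
      have hadj : G.Adj x₀ z := (SimpleGraph.mem_neighborFinset _ _ _).1 hz
      have hzD : z ∈ D := hint.2 z hadj
      have := hv0 z hzD t₀ ht₀
      simp only [hv] at this
      linarith
    -- time derivative is at least ε
    have hg : HasDerivAt (fun r => u x₀ r - ε * r) (u' x₀ t₀ - ε) t₀ := by
      have h1 := hdiff x₀ hx₀ t₀ ht₀
      have h2 : HasDerivAt (fun r : ℝ => ε * r) ε t₀ := by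
        simpa using (hasDerivAt_id t₀).const_mul ε
      exact h1.sub h2
    have hder : 0 ≤ u' x₀ t₀ - ε := by
      apply deriv_nonneg_of_max_left ht₀pos ht₀.2 hg
      intro r hr
      have := hv0 x₀ hx₀ r hr
      simpa [hv] using this
    have := hineq x₀ hint t₀ ht₀
    linarith
  -- conclude
  have h1 := hv0 y hy s hs
  have h2 := hbdry x₀ hx₀ t₀ ht₀ hpb
  simp only [hv] at h1
  -- u y s - ε s ≤ u x₀ t₀ - ε t₀ ≤ u x₁ t' - ε t₀, so δ ≤ ε (s - t₀) ≤ ε T < δ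
  have hεT : ε * (T + 1) = δ := div_mul_cancel₀ δ (by linarith)
  nlinarith [ht₀.1, hs.2, hεpos.le]
end

section
/- Strict submarkov property: if B is a finite connected subgraph with nonempty interior and nonempty boundary, then for all t > 0 and every vertex x ∈ B, Σ_{y∈B} p_t(x,y) < 1, where p_t is the Dirichlet heat kernel of B. -/
open Finset

attribute [local instance] Classical.propDecidable

variable {V : Type*}

/-- The interior of a finite set of vertices `B`: vertices of `B` all of whose
neighbors lie in `B`.  The boundary `∂B` is `B \ intV B`. -/
def intV [DecidableEq V] (G : SimpleGraph V) [G.LocallyFinite] (B : Finset V) : Finset V :=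
  B.filter (fun x => ∀ y ∈ G.neighborFinset x, y ∈ B)

/-- The reduced Dirichlet Laplacian `Δ_B` of a finite subgraph `B`, as a matrix indexed
by the interior vertices (it acts on the space `C(B, ∂B)` of functions on `B` vanishing
on `∂B`, identified with functions on `int B`):
`(Δ_B)_{x y} = m(x) δ_{x y} - (adjacency)`. -/
noncomputable def dirLap [DecidableEq V] (G : SimpleGraph V) [G.LocallyFinite] (B : Finset V) :
    Matrix ↥(intV G B) ↥(intV G B) ℝ :=
  fun x y => (if x = y then (G.degree x.1 : ℝ) else 0) - (if G.Adj x.1 y.1 then 1 else 0)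

/-- The Dirichlet heat kernel `p_t(x,y) = ⟨e^{-tΔ_B} δ_x, δ_y⟩` of the finite subgraph `B`,
where `δ_x = 0` in `C(B, ∂B)` for boundary vertices `x`; it is extended by `0` off the
interior of `B`. -/
noncomputable def heatKer [DecidableEq V] (G : SimpleGraph V) [G.LocallyFinite]
    (B : Finset V) (t : ℝ) (x y : V) : ℝ :=
  if hx : x ∈ intV G B then
    if hy : y ∈ intV G B then NormedSpace.exp (-(t • dirLap G B)) ⟨x, hx⟩ ⟨y, hy⟩
    else 0
  else 0

/-! For `c` at least the largest interior degree, `M = c • 1 - Δ_B` is entrywise nonnegative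
and its row sum at `i` is `c` minus the number of neighbours of `i` outside the interior. Hence
`e^{-tΔ_B} = e^{-tc} e^{tM}`, and the row sums of `e^{tM} = ∑ tᵏ Mᵏ / k!` are at most `e^{tc}`.
Connectedness gives a path through the interior from `x` to an interior vertex `y` adjacent to
the boundary; along it some `(Mᵈ) x y` is positive, so the row sum of `Mᵈ⁺¹` at `x` falls
strictly below `cᵈ⁺¹`, and with it the whole series below `e^{tc}`. Off the interior the kernel
vanishes. -/

open Matrix Relation
open scoped Nat

namespace Matrix

variable {n : Type*} [Fintype n]

theorem mulVec_one_nonneg {M : Matrix n n ℝ} (hM : ∀ i j, 0 ≤ M i j) (i : n) : 0 ≤ (M *ᵥ 1) i :=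
  Finset.sum_nonneg fun j _ => by simpa using hM i j

variable [DecidableEq n]

theorem hasSum_exp_mulVec (A : Matrix n n ℝ) (v : n → ℝ) :
    HasSum (fun k => (k ! : ℝ)⁻¹ • (A ^ k *ᵥ v)) (NormedSpace.exp A *ᵥ v) := by
  have hA : HasSum (fun k => (k ! : ℝ)⁻¹ • A ^ k) (NormedSpace.exp A) :=
    open scoped Norms.Operator in NormedSpace.exp_series_hasSum_exp' A
  convert hA.map (mulVec.addMonoidHomLeft v) (continuous_id.matrix_mulVec continuous_const)
    using 1
  · exact funext fun k => (smul_mulVec (k ! : ℝ)⁻¹ (A ^ k) v).symm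
  · rfl

theorem exp_smul_one (r : ℝ) : NormedSpace.exp (r • 1 : Matrix n n ℝ) = Real.exp r • 1 := by
  rw [smul_one_eq_diagonal, exp_diagonal, smul_one_eq_diagonal, Pi.exp_def, Real.exp_eq_exp_ℝ]

theorem exists_pow_apply_pos_of_reflTransGen {M : Matrix n n ℝ} (hM : ∀ i j, 0 ≤ M i j)
    {i j : n} (hij : ReflTransGen (fun a b => 0 < M a b) i j) : ∃ d, 0 < (M ^ d) i j := by
  induction hij with
  | refl => exact ⟨0, by simp⟩
  | @tail k l _ hkl ih =>
    obtain ⟨d, hd⟩ := ih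
    refine ⟨d + 1, ?_⟩
    rw [pow_succ, mul_apply]
    exact Finset.sum_pos' (fun z _ => mul_nonneg (pow_apply_nonneg hM d i z) (hM z l))
      ⟨k, Finset.mem_univ k, mul_pos hd hkl⟩

theorem pow_succ_mulVec_one_apply (M : Matrix n n ℝ) (k : ℕ) (i : n) :
    (M ^ (k + 1) *ᵥ 1) i = ∑ z, (M ^ k) i z * (M *ᵥ 1) z := by
  rw [pow_succ, ← mulVec_mulVec]
  rfl

section RowSums

variable {M : Matrix n n ℝ} {c : ℝ}

theorem pow_mulVec_one_le (hM : ∀ i j, 0 ≤ M i j) (hrow : ∀ i, (M *ᵥ 1) i ≤ c) (k : ℕ)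
    (i : n) : (M ^ k *ᵥ 1) i ≤ c ^ k := by
  have hc : 0 ≤ c := (mulVec_one_nonneg hM i).trans (hrow i)
  induction k generalizing i with
  | zero => simp [one_mulVec]
  | succ k ih =>
    calc (M ^ (k + 1) *ᵥ 1) i = ∑ z, (M ^ k) i z * (M *ᵥ 1) z := pow_succ_mulVec_one_apply M k i
      _ ≤ ∑ z, (M ^ k) i z * c :=
        Finset.sum_le_sum fun z _ => mul_le_mul_of_nonneg_left (hrow z) (pow_apply_nonneg hM k i z)
      _ = (M ^ k *ᵥ 1) i * c := by simp [mulVec, dotProduct, Finset.sum_mul]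
      _ ≤ c ^ k * c := mul_le_mul_of_nonneg_right (ih i) hc
      _ = c ^ (k + 1) := (pow_succ c k).symm

theorem pow_succ_mulVec_one_lt (hM : ∀ i j, 0 ≤ M i j) (hrow : ∀ i, (M *ᵥ 1) i ≤ c)
    {i y : n} {d : ℕ} (hd : 0 < (M ^ d) i y) (hy : (M *ᵥ 1) y < c) :
    (M ^ (d + 1) *ᵥ 1) i < c ^ (d + 1) := by
  have hc : 0 ≤ c := (mulVec_one_nonneg hM i).trans (hrow i)
  calc (M ^ (d + 1) *ᵥ 1) i = ∑ z, (M ^ d) i z * (M *ᵥ 1) z := pow_succ_mulVec_one_apply M d i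
    _ < ∑ z, (M ^ d) i z * c :=
      Finset.sum_lt_sum
        (fun z _ => mul_le_mul_of_nonneg_left (hrow z) (pow_apply_nonneg hM d i z))
        ⟨y, Finset.mem_univ y, mul_lt_mul_of_pos_left hy hd⟩
    _ = (M ^ d *ᵥ 1) i * c := by simp [mulVec, dotProduct, Finset.sum_mul]
    _ ≤ c ^ d * c := mul_le_mul_of_nonneg_right (pow_mulVec_one_le hM hrow d i) hc
    _ = c ^ (d + 1) := (pow_succ c d).symm

theorem exp_smul_mulVec_one_lt (hM : ∀ i j, 0 ≤ M i j) (hrow : ∀ i, (M *ᵥ 1) i ≤ c)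
    {t : ℝ} (ht : 0 < t) {i : n} {k : ℕ} (hk : (M ^ k *ᵥ 1) i < c ^ k) :
    (NormedSpace.exp (t • M) *ᵥ 1) i < Real.exp (t * c) := by
  have hexp : HasSum (fun k => (k ! : ℝ)⁻¹ * (t * c) ^ k) (Real.exp (t * c)) := by
    simpa [div_eq_inv_mul, Real.exp_eq_exp_ℝ] using NormedSpace.expSeries_div_hasSum_exp (t * c)
  have hrowexp : HasSum (fun k => (k ! : ℝ)⁻¹ * (t ^ k * (M ^ k *ᵥ 1) i))
      ((NormedSpace.exp (t • M) *ᵥ 1) i) := by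
    simpa [smul_pow, smul_mulVec] using Pi.hasSum.mp (hasSum_exp_mulVec (t • M) 1) i
  refine hasSum_lt (fun m => ?_) ?_ hrowexp hexp (i := k)
  · rw [mul_pow]
    gcongr
    exact pow_mulVec_one_le hM hrow m i
  · rw [mul_pow]
    gcongr

end RowSums

theorem exp_neg_smul_mulVec_one_lt {L : Matrix n n ℝ} {c : ℝ} (hM : ∀ i j, 0 ≤ (c • 1 - L) i j)
    (hL : ∀ i, 0 ≤ (L *ᵥ 1) i) {t : ℝ} (ht : 0 < t) {i y : n}
    (hiy : ReflTransGen (fun a b => 0 < (c • 1 - L) a b) i y)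
    (hy : 0 < (L *ᵥ 1) y) : (NormedSpace.exp (-(t • L)) *ᵥ 1) i < 1 := by
  set M := c • 1 - L
  have hMrow : ∀ j, (M *ᵥ 1) j = c - (L *ᵥ 1) j := fun j => by
    simp [M, sub_mulVec, smul_mulVec]
  have hrow : ∀ j, (M *ᵥ 1) j ≤ c := fun j => by linarith [hMrow j, hL j]
  obtain ⟨d, hd⟩ := exists_pow_apply_pos_of_reflTransGen hM hiy
  have hlt := exp_smul_mulVec_one_lt hM hrow ht
    (pow_succ_mulVec_one_lt hM hrow hd (by linarith [hMrow y]))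
  have hsplit : -(t • L) = (-(t * c)) • (1 : Matrix n n ℝ) + t • M := by
    simp only [M]
    module
  rw [hsplit, exp_add_of_commute _ _ ((Commute.one_left _).smul_left _), exp_smul_one,
    smul_mul_assoc, one_mul, smul_mulVec, Pi.smul_apply, smul_eq_mul, Real.exp_neg,
    inv_mul_lt_iff₀ (Real.exp_pos _), mul_one]
  exact hlt

end Matrix

theorem SimpleGraph.Connected.exists_reflTransGen_adj_notMem {G : SimpleGraph V} {B : Set V}
    (hconn : (G.induce B).Connected) {S : Finset V} (hSB : ↑S ⊆ B) {x b : V} (hx : x ∈ S)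
    (hb : b ∈ B) (hbS : b ∉ S) :
    ∃ y : S, ReflTransGen (fun u v : S => G.Adj u v) ⟨x, hx⟩ y ∧ ∃ z, G.Adj y z ∧ z ∉ S := by
  by_contra! hclosed
  have hreach : ∀ v : B, ReflTransGen (G.induce B).Adj ⟨x, hSB hx⟩ v →
      ∃ hv : v.1 ∈ S, ReflTransGen (fun u v : S => G.Adj u v) ⟨x, hx⟩ ⟨v, hv⟩ := by
    intro v hv
    induction hv with
    | refl => exact ⟨hx, .refl⟩
    | tail _ hvw ih =>
      obtain ⟨hv, hxv⟩ := ih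
      exact ⟨hclosed _ hxv _ hvw, hxv.tail hvw⟩
  exact hbS (hreach ⟨b, hb⟩ ((SimpleGraph.reachable_iff_reflTransGen _ _).mp
    (hconn.preconnected _ _))).1

section DirichletLaplacian

variable [DecidableEq V] (G : SimpleGraph V) [G.LocallyFinite] (B : Finset V)

theorem intV_subset : intV G B ⊆ B :=
  filter_subset _ B

theorem dirLap_mulVec_one (i : intV G B) :
    (dirLap G B *ᵥ 1) i = #{z ∈ G.neighborFinset i | z ∉ intV G B} := by
  have hdeg := card_filter_add_card_filter_not (s := G.neighborFinset i)
    (fun z => z ∈ intV G B)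
  have hin : #{z ∈ G.neighborFinset i | z ∈ intV G B} = #{z ∈ intV G B | G.Adj i z} := by
    congr 1; ext z; simp [and_comm]
  simp only [mulVec, dotProduct, dirLap, Pi.one_apply, mul_one, Finset.sum_sub_distrib,
    Finset.sum_ite_eq, Finset.mem_univ, if_true]
  rw [Finset.sum_coe_sort (intV G B) (fun v => if G.Adj i v then (1 : ℝ) else 0),
    Finset.sum_boole, ← hin, ← SimpleGraph.card_neighborFinset_eq_degree, ← hdeg]
  push_cast
  ring

theorem sub_dirLap_apply_nonneg {c : ℝ} (hc : ∀ v ∈ intV G B, (G.degree v : ℝ) ≤ c)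
    (i j : intV G B) : 0 ≤ (c • 1 - dirLap G B) i j := by
  rcases eq_or_ne i j with rfl | hij
  · simpa [dirLap] using hc i i.2
  · simp [dirLap, one_apply_ne hij, hij]
    positivity

theorem sub_dirLap_apply_pos_of_adj (c : ℝ) {i j : intV G B} (hij : G.Adj i j) :
    0 < (c • 1 - dirLap G B) i j := by
  have hne : i ≠ j := fun h => hij.ne (congrArg Subtype.val h)
  simp [dirLap, one_apply_ne hne, hne, hij]

theorem sum_heatKer_eq_mulVec_one (t : ℝ) {x : V} (hx : x ∈ intV G B) :
    ∑ y ∈ B, heatKer G B t x y = (NormedSpace.exp (-(t • dirLap G B)) *ᵥ 1) ⟨x, hx⟩ := by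
  rw [← Finset.sum_subset (intV_subset G B) fun y _ hy => by simp [heatKer, hy],
    ← Finset.sum_coe_sort]
  simp [mulVec, dotProduct, heatKer, hx]

end DirichletLaplacian

theorem heatKer_sum_lt_one_general [DecidableEq V] (G : SimpleGraph V) [G.LocallyFinite]
    (B : Finset V) (hconn : ((G.induce (↑B : Set V))).Connected)
    (hbd : (B \ intV G B).Nonempty)
    (t : ℝ) (ht : 0 < t) (x : V) :
    ∑ y ∈ B, heatKer G B t x y < 1 := by
  by_cases hx : x ∈ intV G B
  swap
  · simp [heatKer, hx]
  obtain ⟨b, hb⟩ := hbd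
  obtain ⟨hbB, hbI⟩ := Finset.mem_sdiff.mp hb
  obtain ⟨y, hxy, z, hyz, hz⟩ :=
    hconn.exists_reflTransGen_adj_notMem (by simpa using intV_subset G B) hx hbB hbI
  have hdeg : ∀ v ∈ intV G B, (G.degree v : ℝ) ≤ ((intV G B).sup (G.degree ·) : ℕ) :=
    fun v hv => by exact_mod_cast Finset.le_sup (f := (G.degree ·)) hv
  rw [sum_heatKer_eq_mulVec_one G B t hx]
  refine exp_neg_smul_mulVec_one_lt (sub_dirLap_apply_nonneg G B hdeg)
    (fun i => by simp [dirLap_mulVec_one]) ht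
    (ReflTransGen.mono (fun _ _ => sub_dirLap_apply_pos_of_adj G B _) _ _ hxy) ?_
  rw [dirLap_mulVec_one]
  exact_mod_cast Finset.card_pos.mpr ⟨z, by simpa using ⟨hyz, hz⟩⟩

/-- **Strict submarkov property.**  If `B` is a finite connected subgraph with nonempty
interior and nonempty boundary, then for all `t > 0` and every vertex `x ∈ B`,
`∑_{y ∈ B} p_t(x,y) < 1`, where `p_t` is the Dirichlet heat kernel of `B`. -/
theorem heatKer_sum_lt_one [DecidableEq V] (G : SimpleGraph V) [G.LocallyFinite]
    (B : Finset V) (hconn : ((G.induce (↑B : Set V))).Connected)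
    (hint : (intV G B).Nonempty) (hbd : (B \ intV G B).Nonempty)
    (t : ℝ) (ht : 0 < t) (x : V) (hx : x ∈ B) :
    ∑ y ∈ B, heatKer G B t x y < 1 :=
  heatKer_sum_lt_one_general G B hconn hbd t ht x
end

section
/- Valence growth criterion for completeness (discrete step): let G be an infinite, locally finite, connected graph with fixed vertex x₀, let λ < 0, and let v be a positive function satisfying Δv = λv. Then for every r there exists a vertex x_{r+1} adjacent to x_r with d(x_{r+1}, x₀) arbitrary such that v(x_{r+1}) ≥ (1 − λ/m(x_r)) v(x_r); consequently, if Σ_{r=0}^∞ 1/M(r) = ∞ where M(r) is the maximal valence on the sphere of radius r about x₀, then v is unbounded. -/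
open Finset

lemma valence_step {V : Type*} [Infinite V] (G : SimpleGraph V) [G.LocallyFinite]
    (hG : G.Connected) (l : ℝ) (v : V → ℝ) (hv : ∀ x, 0 < v x)
    (hharm : ∀ x, graphLap G v x = l * v x) (x : V) :
    ∃ y : V, G.Adj x y ∧ (1 - l / (G.degree x : ℝ)) * v x ≤ v y := by
  have hdeg : 0 < G.degree x := by
    rw [G.degree_pos_iff_exists_adj]
    obtain ⟨y, hy⟩ := exists_ne x
    obtain ⟨w⟩ := hG x y
    cases w with
    | nil => exact absurd rfl hy
    | cons h p => exact ⟨_, h⟩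
  have hd : (0:ℝ) < (G.degree x : ℝ) := by exact_mod_cast hdeg
  have hcard : (G.neighborFinset x).card = G.degree x := rfl
  have hsum : ∑ y ∈ G.neighborFinset x, v y = ((G.degree x : ℝ) - l) * v x := by
    have h := hharm x
    unfold graphLap at h
    rw [Finset.sum_sub_distrib, Finset.sum_const, hcard, nsmul_eq_mul] at h
    linarith
  have hconst : ∑ _y ∈ G.neighborFinset x, ((1 - l / (G.degree x : ℝ)) * v x)
      ≤ ∑ y ∈ G.neighborFinset x, v y := by
    rw [Finset.sum_const, hcard, nsmul_eq_mul, hsum]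
    have : (G.degree x : ℝ) * ((1 - l / (G.degree x : ℝ)) * v x)
        = ((G.degree x : ℝ) - l) * v x := by
      field_simp
    rw [this]
  obtain ⟨y, hy, hyv⟩ := Finset.exists_le_of_sum_le
    (Finset.card_pos.mp (hcard ▸ hdeg)) hconst
  exact ⟨y, (SimpleGraph.mem_neighborFinset G x y).mp hy, hyv⟩

/-- **Valence growth criterion for stochastic completeness (discrete step).**
Let `G` be an infinite, locally finite, connected graph with fixed vertex `x₀`, let
`λ < 0`, and let `v > 0` satisfy `Δv = λv`.  Then every vertex `x` has a neighbor `y`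
with `v(y) ≥ (1 - λ/m(x)) v(x)`; consequently, if `M` bounds the valence on each sphere
about `x₀` (i.e. `m(x) ≤ M(r)` for `x ∈ S_r(x₀)`) and `∑_{r} 1/M(r) = ∞`, then `v` is
unbounded. -/
theorem valence_growth_criterion {V : Type*} [Infinite V] (G : SimpleGraph V)
    [G.LocallyFinite] (hG : G.Connected) (x₀ : V)
    (l : ℝ) (hl : l < 0) (v : V → ℝ) (hv : ∀ x, 0 < v x)
    (hharm : ∀ x, graphLap G v x = l * v x)
    (M : ℕ → ℝ) (hM : ∀ r, 0 < M r)
    (hMval : ∀ x, (G.degree x : ℝ) ≤ M (G.dist x₀ x))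
    (hdiv : ¬ Summable (fun r : ℕ => 1 / M r)) :
    (∀ x : V, ∃ y : V, G.Adj x y ∧ (1 - l / (G.degree x : ℝ)) * v x ≤ v y) ∧
      ¬ BddAbove (Set.range v) := by
  have hstep := valence_step G hG l v hv hharm
  refine ⟨hstep, ?_⟩
  intro hbdd
  obtain ⟨B, hB⟩ := hbdd
  choose f hadj hgrow using hstep
  -- the sequence and its distances
  set seq : ℕ → V := fun n => f^[n] x₀ with hseq
  set d : ℕ → ℕ := fun n => G.dist x₀ (seq n) with hdd
  have hseqsucc : ∀ n, seq (n + 1) = f (seq n) := fun n =>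
    Function.iterate_succ_apply' f n x₀
  have hdegpos : ∀ x : V, (0:ℝ) < (G.degree x : ℝ) := by
    intro x
    have : 0 < G.degree x := by
      rw [G.degree_pos_iff_exists_adj]
      exact ⟨f x, hadj x⟩
    exact_mod_cast this
  -- distance increases by at most one
  have hdstep : ∀ n, d (n + 1) ≤ d n + 1 := by
    intro n
    have hA : G.Adj (seq n) (seq (n + 1)) := by rw [hseqsucc]; exact hadj _
    have h1 : G.dist x₀ (seq (n+1)) ≤ G.dist x₀ (seq n) + G.dist (seq n) (seq (n+1)) :=
      hG.dist_triangle
    have h2 : G.dist (seq n) (seq (n+1)) ≤ 1 := by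
      simpa using SimpleGraph.dist_le (hA.toWalk)
    simp only [hdd]
    omega
  -- one-step growth estimate
  have hgrow' : ∀ n, (1 + (-l) / M (d n)) * v (seq n) ≤ v (seq (n + 1)) := by
    intro n
    have h1 : (1 + (-l) / M (d n)) ≤ (1 - l / (G.degree (seq n) : ℝ)) := by
      have hdle : (G.degree (seq n) : ℝ) ≤ M (d n) := hMval (seq n)
      have h := div_le_div_of_nonneg_left (le_of_lt (neg_pos.mpr hl)) (hdegpos (seq n)) hdle
      rw [neg_div, neg_div] at h
      rw [neg_div]
      linarith
    have h2 : (1 + (-l) / M (d n)) * v (seq n)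
        ≤ (1 - l / (G.degree (seq n) : ℝ)) * v (seq n) :=
      mul_le_mul_of_nonneg_right h1 (le_of_lt (hv _))
    calc (1 + (-l) / M (d n)) * v (seq n)
        ≤ (1 - l / (G.degree (seq n) : ℝ)) * v (seq n) := h2
      _ ≤ v (seq (n+1)) := by rw [hseqsucc]; exact hgrow _
  -- accumulated growth
  have hsumpos : ∀ n, (0:ℝ) ≤ ∑ k ∈ Finset.range n, 1 / M (d k) := by
    intro n
    exact Finset.sum_nonneg fun k _ => one_div_nonneg.mpr (le_of_lt (hM _))
  have hacc : ∀ n, v x₀ * (1 + (-l) * ∑ k ∈ Finset.range n, 1 / M (d k)) ≤ v (seq n) := by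
    intro n
    induction n with
    | zero => simp [hseq]
    | succ n ih =>
        have ha : (0:ℝ) ≤ (-l) / M (d n) :=
          div_nonneg (le_of_lt (neg_pos.mpr hl)) (le_of_lt (hM _))
        have hS : (0:ℝ) ≤ (-l) * ∑ k ∈ Finset.range n, 1 / M (d k) := by
          have := neg_pos.mpr hl
          exact mul_nonneg (le_of_lt this) (hsumpos n)
        have key := le_trans
          (mul_le_mul_of_nonneg_left ih (by linarith : (0:ℝ) ≤ 1 + (-l) / M (d n)))
          (hgrow' n)
        rw [Finset.sum_range_succ]
        have hvx : 0 < v x₀ := hv x₀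
        calc v x₀ * (1 + (-l) * (∑ k ∈ Finset.range n, 1 / M (d k) + 1 / M (d n)))
            ≤ (1 + (-l) / M (d n)) * (v x₀ * (1 + (-l) * ∑ k ∈ Finset.range n, 1 / M (d k))) := by
              have hml : (-l) * (1 / M (d n)) = (-l) / M (d n) := by ring
              nlinarith [mul_nonneg ha hS, hv x₀]
          _ ≤ v (seq (n + 1)) := key
  -- partial sums are bounded, hence summable
  have hC : ∀ n, ∑ k ∈ Finset.range n, 1 / M (d k) ≤ (B / v x₀ - 1) / (-l) := by
    intro n
    have hvB : v (seq n) ≤ B := hB ⟨seq n, rfl⟩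
    have h := le_trans (hacc n) hvB
    have hvx : 0 < v x₀ := hv x₀
    have hnl : 0 < -l := neg_pos.mpr hl
    rw [le_div_iff₀ hnl]
    have hBv : (B / v x₀) * v x₀ = B := div_mul_cancel₀ B (ne_of_gt hvx)
    nlinarith [h, hvx, hBv]
  have hSummable : Summable (fun k : ℕ => 1 / M (d k)) :=
    summable_of_sum_range_le (fun k => one_div_nonneg.mpr (le_of_lt (hM _))) hC
  -- now derive a contradiction with the divergence hypothesis
  by_cases hfin : ∀ n : ℕ, {k : ℕ | d k = n}.Finite
  · -- every level set finite: every value is attained, so ∑ 1/M(r) converges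
    have hattain : ∀ n : ℕ, ∃ k, d k = n := by
      intro n
      induction n with
      | zero => exact ⟨0, by simp [hdd, hseq]⟩
      | succ n ih =>
          obtain ⟨k, hk⟩ := ih
          -- the set of indices with distance ≤ n is finite
          have hAfin : {j : ℕ | d j ≤ n}.Finite := by
            have : {j : ℕ | d j ≤ n} ⊆ ⋃ i ∈ Finset.range (n+1), {j : ℕ | d j = i} := by
              intro j hj
              rw [Set.mem_setOf_eq] at hj
              simp only [Set.mem_iUnion, Finset.mem_range, Set.mem_setOf_eq]
              exact ⟨d j, by omega, rfl⟩
            exact Set.Finite.subset (Set.Finite.biUnion (Finset.range (n+1)).finite_toSet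
              (fun i _ => hfin i)) this
          obtain ⟨m, hm1, hm2⟩ := hAfin.infinite_compl.exists_gt k
          have hm1' : ¬ d m ≤ n := by simpa using hm1
          have hmn : n + 1 ≤ d m := by omega
          -- take the least index j > k with d j ≥ n + 1
          have hex : ∃ j, k < j ∧ n + 1 ≤ d j := ⟨m, hm2, hmn⟩
          classical
          set j := Nat.find hex with hj
          have hspec := Nat.find_spec hex
          rw [← hj] at hspec
          obtain ⟨hjk, hjd⟩ := hspec
          have hprev : d (j - 1) ≤ n := by
            rcases Nat.lt_or_ge k (j - 1) with h | h
            · have := Nat.find_min hex (m := j - 1) (by omega)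
              push_neg at this
              have := this h
              omega
            · -- j - 1 ≤ k, and since k < j we get j - 1 = k
              have : j - 1 = k := by omega
              rw [this, hk]
          have := hdstep (j - 1)
          have hj1 : j - 1 + 1 = j := by omega
          rw [hj1] at this
          exact ⟨j, by omega⟩
    choose g hg using hattain
    have hginj : Function.Injective g := by
      intro a b hab
      rw [← hg a, ← hg b, hab]
    have : Summable ((fun k : ℕ => 1 / M (d k)) ∘ g) := hSummable.comp_injective hginj
    apply hdiv
    convert this using 2 with r
    simp [Function.comp, hg]
  · -- some level set infinite: terms don't tend to zero, contradiction
    push_neg at hfin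
    obtain ⟨n, hn⟩ := hfin
    have hn : {k : ℕ | d k = n}.Infinite := hn
    have htend := hSummable.tendsto_atTop_zero
    rw [Metric.tendsto_atTop] at htend
    obtain ⟨N, hN⟩ := htend (1 / M n) (one_div_pos.mpr (hM n))
    obtain ⟨k, hk1, hk2⟩ := hn.exists_gt N
    have := hN k (le_of_lt hk2)
    rw [Set.mem_setOf_eq] at hk1
    rw [Real.dist_eq, sub_zero, hk1, abs_of_pos (one_div_pos.mpr (hM n))] at this
    exact lt_irrefl _ this
end

section
/- Existence of a bounded positive λ-subharmonic function under rapid branching: let G be an infinite, locally finite, connected graph with fixed vertex x₀ such that Σ_{r≥1} m̄₋(r)/m̲₊(r) < ∞, where m̲₊(r) is the minimum over x ∈ S_r(x₀) of the number of neighbors of x in S_{r+1}(x₀) and m̄₋(r) is the maximum over x ∈ S_r(x₀) of the number of neighbors in S_{r−1}(x₀). Then for every λ < 0 there exists a bounded, positive function v on the vertices, depending only on distance from x₀, such that Δv(x) ≤ λv(x) for all x. -/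
/-! Take `v = f ∘ dist x₀` with `f n = ∏ k < n, (1 + d k)`. For monotone `f` one has
`Δv ≤ m̄₋(r) (f r - f (r - 1)) - m̲₊(r) (f (r + 1) - f r)`, so `Δv ≤ λ v` follows once
`m̲₊(r) d r = m̄₋(r) d (r - 1) - λ`: an affine recursion `d r = b r * d (r - 1) + c r` with
`b = m̄₋ / m̲₊` and `c = -λ / m̲₊`. On an infinite connected graph every sphere is nonempty,
so `m̄₋(r) ≥ 1` for `r ≥ 1`, whence `c ≤ -λ b` is summable along with `b`. Then `d` is
summable and `f ≤ exp (∑ d)` is bounded. -/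

open Finset

/-- `m_{+1}(x)`: the number of neighbors of `x` in the next sphere about `x₀`. -/
noncomputable def mPlus {V : Type*} (G : SimpleGraph V) [G.LocallyFinite] (x₀ x : V) : ℕ :=
  ((G.neighborFinset x).filter (fun y => G.dist x₀ y = G.dist x₀ x + 1)).card

/-- `m_{-1}(x)`: the number of neighbors of `x` in the previous sphere about `x₀`. -/
noncomputable def mMinus {V : Type*} (G : SimpleGraph V) [G.LocallyFinite] (x₀ x : V) : ℕ :=
  ((G.neighborFinset x).filter (fun y => G.dist x₀ y + 1 = G.dist x₀ x)).card

namespace SimpleGraph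

variable {V : Type*} {G : SimpleGraph V} {x₀ x : V}

lemma Connected.exists_adj_dist_eq (hG : G.Connected) {n : ℕ} (hx : G.dist x₀ x = n + 1) :
    ∃ y, G.Adj x y ∧ G.dist x₀ y = n := by
  obtain ⟨p, hp⟩ := hG.exists_walk_length_eq_dist x x₀
  cases p with
  | nil => simp at hx
  | @cons _ y _ hadj q =>
    have hq : G.dist x₀ y ≤ n := by
      have := dist_le q
      rw [Walk.length_cons, dist_comm, hx] at hp
      rw [dist_comm]
      omega
    refine ⟨y, hadj, ?_⟩
    rcases hadj.diff_dist_adj (u := x₀) with h | h | h <;> omega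

lemma Connected.finite_setOf_dist_le [G.LocallyFinite] (hG : G.Connected) (x₀ : V) (n : ℕ) :
    {x | G.dist x₀ x ≤ n}.Finite := by
  induction n with
  | zero => simp [hG.dist_eq_zero_iff]
  | succ n ih =>
    refine (ih.union (ih.biUnion fun y _ => (G.neighborSet y).toFinite)).subset fun x hx => ?_
    rcases Nat.le_succ_iff.mp hx with hle | heq
    · exact Or.inl hle
    · obtain ⟨y, hadj, hy⟩ := hG.exists_adj_dist_eq heq
      exact Or.inr (Set.mem_biUnion hy.le hadj.symm)

lemma Connected.exists_dist_eq [Infinite V] [G.LocallyFinite] (hG : G.Connected) (x₀ : V)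
    (n : ℕ) : ∃ x, G.dist x₀ x = n := by
  have descend : ∀ k, (∃ x, G.dist x₀ x = n + k) → ∃ x, G.dist x₀ x = n := by
    intro k
    induction k with
    | zero => exact id
    | succ k ih =>
      rintro ⟨x, hx⟩
      obtain ⟨y, -, hy⟩ := hG.exists_adj_dist_eq hx
      exact ih ⟨y, hy⟩
  obtain ⟨x, hx⟩ : ∃ x, n ≤ G.dist x₀ x := by
    by_contra! h
    exact Set.infinite_univ ((hG.finite_setOf_dist_le x₀ n).subset fun x _ => (h x).le)
  exact descend _ ⟨x, (Nat.add_sub_cancel' hx).symm⟩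

lemma Connected.mMinus_pos [G.LocallyFinite] (hG : G.Connected) (hx : G.dist x₀ x ≠ 0) :
    0 < mMinus G x₀ x := by
  obtain ⟨n, hn⟩ := Nat.exists_eq_succ_of_ne_zero hx
  obtain ⟨y, hadj, hy⟩ := hG.exists_adj_dist_eq hn
  exact card_pos.mpr ⟨y, by simp [hadj, hy, hn]⟩

end SimpleGraph

section radial

variable {V : Type*} {G : SimpleGraph V} [G.LocallyFinite]

lemma graphLap_comp_dist (f : ℕ → ℝ) (x₀ x : V) :
    graphLap G (fun y => f (G.dist x₀ y)) x =
      mMinus G x₀ x * (f (G.dist x₀ x) - f (G.dist x₀ x - 1)) +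
        mPlus G x₀ x * (f (G.dist x₀ x) - f (G.dist x₀ x + 1)) := by
  rw [graphLap, mMinus, mPlus, ← nsmul_eq_mul, ← nsmul_eq_mul, ← sum_const, ← sum_const,
    sum_filter, sum_filter, ← sum_add_distrib]
  refine sum_congr rfl fun y hy => ?_
  rcases ((G.mem_neighborFinset x y).mp hy).diff_dist_adj (u := x₀) with h | h | h <;>
    split_ifs <;> grind

lemma graphLap_comp_dist_le {f : ℕ → ℝ} (hf : Monotone f) {x₀ x : V} {a b : ℝ}
    (ha : a ≤ mPlus G x₀ x) (hb : mMinus G x₀ x ≤ b) :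
    graphLap G (fun y => f (G.dist x₀ y)) x ≤
      b * (f (G.dist x₀ x) - f (G.dist x₀ x - 1)) -
        a * (f (G.dist x₀ x + 1) - f (G.dist x₀ x)) := by
  rw [graphLap_comp_dist]
  have hdown := sub_nonneg.mpr (hf (Nat.sub_le (G.dist x₀ x) 1))
  have hup := sub_nonneg.mpr (hf (Nat.le_succ (G.dist x₀ x)))
  nlinarith [mul_le_mul_of_nonneg_right hb hdown, mul_le_mul_of_nonneg_right ha hup]

end radial

noncomputable def affineRec (b c : ℕ → ℝ) : ℕ → ℝ
  | 0 => c 0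
  | n + 1 => b (n + 1) * affineRec b c n + c (n + 1)

section affineRec

variable {b c : ℕ → ℝ}

lemma affineRec_nonneg (hb : 0 ≤ b) (hc : 0 ≤ c) (n : ℕ) : 0 ≤ affineRec b c n := by
  induction n with
  | zero => exact hc 0
  | succ n ih => exact add_nonneg (mul_nonneg (hb _) ih) (hc _)

lemma affineRec_le_tsum_mul_prod (hb : 0 ≤ b) (hc : 0 ≤ c) (hcs : Summable c) (n : ℕ) :
    affineRec b c n ≤ (∑' k, c k) * ∏ k ∈ range n, (1 + b (k + 1)) := by
  have hS : 0 ≤ ∑' k, c k := tsum_nonneg hc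
  have hcS : ∀ k, c k ≤ ∑' k, c k := fun k => hcs.le_tsum k fun j _ => hc j
  induction n with
  | zero => simpa [affineRec] using hcS 0
  | succ n ih =>
    have hP : 1 ≤ ∏ k ∈ range n, (1 + b (k + 1)) :=
      one_le_prod fun k _ => le_add_of_nonneg_right (hb _)
    rw [affineRec, prod_range_succ]
    nlinarith [mul_le_mul_of_nonneg_left ih (hb (n + 1)), hcS (n + 1), hb (n + 1)]

lemma summable_affineRec (hb : 0 ≤ b) (hc : 0 ≤ c) (hbs : Summable b) (hcs : Summable c) :
    Summable (affineRec b c) := by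
  set M := (∑' k, c k) * Real.exp (∑' k, b (k + 1))
  have hM : ∀ n, affineRec b c n ≤ M := fun n =>
    (affineRec_le_tsum_mul_prod hb hc hcs n).trans <| mul_le_mul_of_nonneg_left
      ((Real.prod_one_add_le_exp_sum _ fun k => hb _).trans <| Real.exp_le_exp.mpr <|
        ((summable_nat_add_iff 1).mpr hbs).sum_le_tsum _ fun k _ => hb _)
      (tsum_nonneg hc)
  refine (summable_nat_add_iff 1).mp <| Summable.of_nonneg_of_le
    (fun n => affineRec_nonneg hb hc _) (fun n => ?_)
    ((((summable_nat_add_iff 1).mpr hbs).mul_right M).add ((summable_nat_add_iff 1).mpr hcs))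
  simp only [affineRec]
  gcongr
  · exact hb _
  · exact hM n

end affineRec

lemma exists_radial_profile {mlow mbar : ℕ → ℝ} {l : ℝ} (hlow : ∀ r, 0 < mlow r)
    (hbar : ∀ r, 0 ≤ mbar r) (hsum : Summable fun r => mbar r / mlow r)
    (hinv : Summable fun r => 1 / mlow r) (hl : l ≤ 0) :
    ∃ f : ℕ → ℝ, Monotone f ∧ (∀ r, 0 < f r) ∧ BddAbove (Set.range f) ∧
      ∀ r, mbar r * (f r - f (r - 1)) - mlow r * (f (r + 1) - f r) ≤ l * f r := by
  set d := affineRec (fun r => mbar r / mlow r) (fun r => -l / mlow r)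
  have hb : 0 ≤ fun r => mbar r / mlow r := fun r => div_nonneg (hbar r) (hlow r).le
  have hc : 0 ≤ fun r => -l / mlow r := fun r => div_nonneg (neg_nonneg.mpr hl) (hlow r).le
  have hd : ∀ n, 0 ≤ d n := affineRec_nonneg hb hc
  have hds : Summable d := summable_affineRec hb hc hsum <| by
    simpa only [mul_one_div] using hinv.mul_left (-l)
  set f : ℕ → ℝ := fun n => ∏ k ∈ range n, (1 + d k)
  have hinc : ∀ n, f (n + 1) - f n = d n * f n := fun n => by
    simp only [f, prod_range_succ]
    ring
  have hf_one : ∀ n, 1 ≤ f n := fun n => one_le_prod fun k _ => le_add_of_nonneg_right (hd k)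
  have hmono : Monotone f := monotone_nat_of_le_succ fun n =>
    sub_nonneg.mp <| hinc n ▸ mul_nonneg (hd n) (zero_le_one.trans (hf_one n))
  refine ⟨f, hmono, fun n => one_pos.trans_le (hf_one n), ⟨Real.exp (∑' k, d k), ?_⟩, ?_⟩
  · rintro _ ⟨n, rfl⟩
    exact (Real.prod_one_add_le_exp_sum _ hd).trans
      (Real.exp_le_exp.mpr (hds.sum_le_tsum _ fun k _ => hd k))
  · intro r
    cases r with
    | zero =>
      have : mlow 0 * d 0 = -l := mul_div_cancel₀ _ (hlow 0).ne'
      rw [Nat.zero_sub, sub_self, mul_zero, zero_sub, hinc]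
      linear_combination (-f 0) * this
    | succ n =>
      have hrec : mlow (n + 1) * d (n + 1) = mbar (n + 1) * d n - l := by
        simp only [d, affineRec]
        field_simp [(hlow (n + 1)).ne']
        ring
      have := mul_le_mul_of_nonneg_left (hmono n.le_succ) (mul_nonneg (hbar (n + 1)) (hd n))
      rw [Nat.add_sub_cancel, hinc, hinc]
      linear_combination this - f (n + 1) * hrec

/-- **Existence of a bounded positive λ-subharmonic function under rapid branching.**
Let `G` be an infinite, locally finite, connected graph with fixed vertex `x₀`, and
suppose `m̲₊(r) ≤ m_{+1}(x)` and `m_{-1}(x) ≤ m̄₋(r)` for every `x ∈ S_r(x₀)`, with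
`m̲₊(r) > 0`, `m̄₋(r) ≥ 0`, and `∑_{r} m̄₋(r)/m̲₊(r) < ∞`.  Then for every `λ < 0`
there is a bounded positive function `v`, depending only on the distance from `x₀`,
with `Δv(x) ≤ λ v(x)` for all `x`. -/
theorem exists_bounded_subharmonic {V : Type*} [Infinite V] (G : SimpleGraph V)
    [G.LocallyFinite] (hG : G.Connected) (x₀ : V)
    (mlow mbar : ℕ → ℝ) (hlow : ∀ r, 0 < mlow r) (hbar : ∀ r, 0 ≤ mbar r)
    (hlow_le : ∀ x : V, mlow (G.dist x₀ x) ≤ (mPlus G x₀ x : ℝ))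
    (hbar_ge : ∀ x : V, (mMinus G x₀ x : ℝ) ≤ mbar (G.dist x₀ x))
    (hsum : Summable (fun r : ℕ => mbar r / mlow r))
    (l : ℝ) (hl : l < 0) :
    ∃ v : V → ℝ, ∃ C : ℝ,
      (∀ x, 0 < v x) ∧ (∀ x, v x ≤ C) ∧
      (∀ x y : V, G.dist x₀ x = G.dist x₀ y → v x = v y) ∧
      (∀ x, graphLap G v x ≤ l * v x) := by
  have hbar_one : ∀ r, 1 ≤ mbar (r + 1) := fun r => by
    obtain ⟨x, hx⟩ := hG.exists_dist_eq x₀ (r + 1)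
    calc (1 : ℝ) ≤ mMinus G x₀ x := by exact_mod_cast hG.mMinus_pos (by omega)
      _ ≤ mbar (r + 1) := hx ▸ hbar_ge x
  have hinv : Summable fun r => 1 / mlow r :=
    (summable_nat_add_iff 1).mp <| ((summable_nat_add_iff 1).mpr hsum).of_nonneg_of_le
      (fun r => (one_div_pos.mpr (hlow _)).le)
      (fun r => div_le_div_of_nonneg_right (hbar_one r) (hlow _).le)
  obtain ⟨f, hmono, hpos, ⟨C, hC⟩, hf⟩ := exists_radial_profile hlow hbar hsum hinv hl.le
  exact ⟨fun x => f (G.dist x₀ x), C, fun x => hpos _, fun x => hC ⟨_, rfl⟩,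
    fun x y h => congrArg f h,
    fun x => (graphLap_comp_dist_le hmono (hlow_le x) (hbar_ge x)).trans (hf _)⟩
end

section
/- Explicit recursion for the radial subharmonic function: define v(0) > 0, v(1) = (1 − λ/m(x₀)) v(0), and v(r+1) = (1 + (m̄₋(r) − λ)/m̲₊(r)) v(r) − (m̄₋(r)/m̲₊(r)) v(r−1) for r ≥ 1, with λ < 0. Then v is strictly increasing, and v(r) ≤ ∏_{i=0}^∞ (1 + (m̄₋(i) − λ)/m̲₊(i)) · v(0) for all r; in particular v is bounded whenever Σ_{i≥1} m̄₋(i)/m̲₊(i) < ∞. -/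
open Finset

/-- **Explicit recursion for the radial subharmonic function.**  Let `λ < 0`,
`m̲₊(r) > 0`, `m̄₋(r) ≥ 0` with `m̄₋(0) = 0` (so that the initial step reads
`v(1) = (1 - λ/m(x₀)) v(0)` with `m(x₀) = m̲₊(0)`), and define `v(0) > 0` and
`v(r+1) = (1 + (m̄₋(r) - λ)/m̲₊(r)) v(r) - (m̄₋(r)/m̲₊(r)) v(r-1)`.
Then `v` is strictly increasing and `v(r) ≤ ∏_{i=0}^∞ (1 + (m̄₋(i) - λ)/m̲₊(i)) · v(0)`
for all `r`; in particular `v` is bounded whenever the series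
`∑ (m̄₋(i) - λ)/m̲₊(i)` converges (which holds when `∑ m̄₋(i)/m̲₊(i) < ∞` and
`∑ 1/m̲₊(i) < ∞`). -/
theorem radial_recursion_bounded
    (l : ℝ) (hl : l < 0)
    (mlow mbar : ℕ → ℝ) (hlow : ∀ r, 0 < mlow r) (hbar : ∀ r, 0 ≤ mbar r)
    (hbar0 : mbar 0 = 0)
    (v : ℕ → ℝ) (hv0 : 0 < v 0)
    (hrec : ∀ r : ℕ,
      v (r + 1) = (1 + (mbar r - l) / mlow r) * v r - (mbar r / mlow r) * v (r - 1)) :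
    StrictMono v ∧
    (Multipliable (fun i : ℕ => 1 + (mbar i - l) / mlow i) →
      ∀ r, v r ≤ (∏' i : ℕ, (1 + (mbar i - l) / mlow i)) * v 0) ∧
    (Summable (fun i : ℕ => (mbar i - l) / mlow i) → ∃ C : ℝ, ∀ r, v r ≤ C) := by
  set b : ℕ → ℝ := fun i => (mbar i - l) / mlow i with hb
  have hbpos : ∀ i, 0 < b i := fun i =>
    div_pos (by linarith [hbar i]) (hlow i)
  -- main induction: positivity and strict step
  have key : ∀ r : ℕ, 0 < v r ∧ v r < v (r + 1) := by
    intro r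
    induction r with
    | zero =>
      refine ⟨hv0, ?_⟩
      have h := hrec 0
      rw [hbar0] at h
      simp only [zero_sub, zero_div, zero_mul, sub_zero] at h
      rw [h]
      have : 0 < -l / mlow 0 := div_pos (by linarith) (hlow 0)
      nlinarith
    | succ r ih =>
      obtain ⟨hpos, hlt⟩ := ih
      have hpos' : 0 < v (r + 1) := lt_trans hpos hlt
      refine ⟨hpos', ?_⟩
      have h := hrec (r + 1)
      simp only [Nat.add_sub_cancel] at h
      have hm := hlow (r + 1)
      have hb := hbar (r + 1)
      have hq : 0 ≤ mbar (r + 1) / mlow (r + 1) := div_nonneg hb hm.le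
      have hl' : 0 < -l / mlow (r + 1) := div_pos (by linarith) hm
      have : v (r + 1 + 1) - v (r + 1) =
          (mbar (r + 1) / mlow (r + 1)) * (v (r + 1) - v r)
          + (-l / mlow (r + 1)) * v (r + 1) := by
        rw [h]; field_simp; ring
      nlinarith
  have hvpos : ∀ r, 0 < v r := fun r => (key r).1
  have hmono : StrictMono v := strictMono_nat_of_lt_succ fun r => (key r).2
  -- partial product bound
  have hprod : ∀ r : ℕ, v r ≤ (∏ i ∈ range r, (1 + b i)) * v 0 := by
    intro r
    induction r with
    | zero => simp
    | succ r ih =>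
      have h := hrec r
      have step : v (r + 1) ≤ (1 + b r) * v r := by
        rw [h]
        have : 0 ≤ (mbar r / mlow r) * v (r - 1) :=
          mul_nonneg (div_nonneg (hbar r) (hlow r).le) (hvpos _).le
        linarith
      have hfac : 0 ≤ 1 + b r := by linarith [hbpos r]
      calc v (r + 1) ≤ (1 + b r) * v r := step
        _ ≤ (1 + b r) * ((∏ i ∈ range r, (1 + b i)) * v 0) := by
            exact mul_le_mul_of_nonneg_left ih hfac
        _ = (∏ i ∈ range (r + 1), (1 + b i)) * v 0 := by
            rw [prod_range_succ]; ring
  refine ⟨hmono, ?_, ?_⟩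
  · intro hmul r
    have hge : ∀ s : Finset ℕ, range r ⊆ s →
        (∏ i ∈ range r, (1 + b i)) ≤ ∏ i ∈ s, (1 + b i) := by
      intro s hs
      rw [← Finset.prod_sdiff hs]
      have h1 : (1 : ℝ) ≤ ∏ i ∈ s \ range r, (1 + b i) := by
        calc (1 : ℝ) = ∏ _i ∈ s \ range r, (1 : ℝ) := by simp
          _ ≤ _ := Finset.prod_le_prod (by intros; norm_num)
              (fun i _ => by linarith [hbpos i])
      have hp : 0 ≤ ∏ i ∈ range r, (1 + b i) :=
        Finset.prod_nonneg fun i _ => by linarith [hbpos i]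
      nlinarith
    have h1 : (∏ i ∈ range r, (1 + b i)) ≤ ∏' i, (1 + b i) :=
      ge_of_tendsto hmul.hasProd
        ((Filter.eventually_ge_atTop (range r)).mono fun s hs => hge s hs)
    exact (hprod r).trans (mul_le_mul_of_nonneg_right h1 hv0.le)
  · intro hsum
    refine ⟨Real.exp (∑' i, b i) * v 0, fun r => ?_⟩
    have h1 : (∏ i ∈ range r, (1 + b i)) ≤ Real.exp (∑ i ∈ range r, b i) := by
      rw [Real.exp_sum]
      exact prod_le_prod (fun i _ => by linarith [hbpos i])
        (fun i _ => by have := Real.add_one_le_exp (b i); linarith)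
    have h2 : (∑ i ∈ range r, b i) ≤ ∑' i, b i :=
      Summable.sum_le_tsum (range r) (fun i _ => (hbpos i).le) hsum
    have h3 : (∏ i ∈ range r, (1 + b i)) ≤ Real.exp (∑' i, b i) :=
      h1.trans (Real.exp_le_exp.mpr h2)
    exact (hprod r).trans (mul_le_mul_of_nonneg_right h3 hv0.le)
end

section
/- Cheeger-type lower bound via distance function: let G be a locally finite graph with fixed vertex x₀, r(x) = d(x, x₀), and suppose A is a finite subgraph such that for all vertices x ∉ A, (m_{+1}(x) − m_{−1}(x))/m(x) ≥ c > 0. Then for every finite subgraph D disjoint from A, c · Σ_{x∈D} m(x) ≤ L(∂D), where L(∂D) is the number of edges with exactly one endpoint in D. In particular the Cheeger constant α(G \ A) = inf_D L(∂D)/A(D) over finite D disjoint from A satisfies α(G \ A) ≥ c. -/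
open Finset

attribute [local instance] Classical.propDecidable

/-- `L(∂D)`: the number of edges with exactly one endpoint in the finite set `D`. -/
noncomputable def boundaryEdges {V : Type*} (G : SimpleGraph V) [G.LocallyFinite]
    (D : Finset V) : ℕ :=
  ∑ x ∈ D, ((G.neighborFinset x).filter (fun y => y ∉ D)).card

/-- **Cheeger-type lower bound via the distance function.**  Let `G` be a locally finite
graph with fixed vertex `x₀`, `A` a finite set of vertices, and suppose that for all
`x ∉ A`, `(m_{+1}(x) - m_{-1}(x))/m(x) ≥ c > 0` (in product form
`c·m(x) + m_{-1}(x) ≤ m_{+1}(x)`).  Then every finite set `D` of vertices disjoint from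
`A` satisfies `c · A(D) ≤ L(∂D)` where `A(D) = ∑_{x ∈ D} m(x)`; in particular
`c ≤ L(∂D)/A(D)` whenever `A(D) > 0`, so the Cheeger constant `α(G \ A)` is `≥ c`. -/
theorem cheeger_lower_bound {V : Type*} (G : SimpleGraph V) [G.LocallyFinite]
    (x₀ : V) (A : Finset V) (c : ℝ) (hc : 0 < c)
    (hcurv : ∀ x : V, x ∉ A →
      c * (G.degree x : ℝ) + (mMinus G x₀ x : ℝ) ≤ (mPlus G x₀ x : ℝ)) :
    ∀ D : Finset V, (∀ x ∈ D, x ∉ A) →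
      (c * ∑ x ∈ D, (G.degree x : ℝ) ≤ (boundaryEdges G D : ℝ)) ∧
      (0 < ∑ x ∈ D, (G.degree x : ℝ) →
        c ≤ (boundaryEdges G D : ℝ) / ∑ x ∈ D, (G.degree x : ℝ)) := by
  intro D hD
  set r := G.dist x₀ with hr
  -- inside/outside splits
  have hsplit : ∀ (P : V → Prop) (x : V),
      ((G.neighborFinset x).filter P).card =
        (D.filter (fun y => G.Adj x y ∧ P y)).card +
        ((G.neighborFinset x).filter (fun y => y ∉ D ∧ P y)).card := by
    intro P x
    have h1 : ((G.neighborFinset x).filter P).filter (fun y => y ∈ D) =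
        D.filter (fun y => G.Adj x y ∧ P y) := by
      ext y
      simp [SimpleGraph.mem_neighborFinset, Finset.mem_filter, and_comm, and_assoc, and_left_comm]
    have h2 : ((G.neighborFinset x).filter P).filter (fun y => y ∉ D) =
        (G.neighborFinset x).filter (fun y => y ∉ D ∧ P y) := by
      ext y
      simp [Finset.mem_filter, and_comm, and_assoc, and_left_comm]
    calc ((G.neighborFinset x).filter P).card
        = (((G.neighborFinset x).filter P).filter (fun y => y ∈ D)).card +
          (((G.neighborFinset x).filter P).filter (fun y => y ∉ D)).card :=
          (Finset.card_filter_add_card_filter_not _).symm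
      _ = _ := by rw [h1, h2]
  -- the inner sums are equal by symmetry
  have hin : ∑ x ∈ D, (D.filter (fun y => G.Adj x y ∧ r y = r x + 1)).card =
      ∑ x ∈ D, (D.filter (fun y => G.Adj x y ∧ r y + 1 = r x)).card := by
    have e1 : ∀ x ∈ D, (D.filter (fun y => G.Adj x y ∧ r y = r x + 1)).card =
        ∑ y ∈ D, if G.Adj x y ∧ r y = r x + 1 then 1 else 0 := by
      intro x _; rw [Finset.card_filter]
    have e2 : ∀ x ∈ D, (D.filter (fun y => G.Adj x y ∧ r y + 1 = r x)).card =
        ∑ y ∈ D, if G.Adj x y ∧ r y + 1 = r x then 1 else 0 := by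
      intro x _; rw [Finset.card_filter]
    rw [Finset.sum_congr rfl e1, Finset.sum_congr rfl e2, Finset.sum_comm]
    apply Finset.sum_congr rfl; intro y _
    apply Finset.sum_congr rfl; intro x _
    refine if_congr ⟨?_, ?_⟩ rfl rfl
    · rintro ⟨h, h'⟩; exact ⟨h.symm, h'.symm⟩
    · rintro ⟨h, h'⟩; exact ⟨h.symm, h'.symm⟩
  -- main counting inequality in ℕ
  have hnat : ∑ x ∈ D, mPlus G x₀ x ≤ ∑ x ∈ D, mMinus G x₀ x + boundaryEdges G D := by
    have hP : ∑ x ∈ D, mPlus G x₀ x =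
        ∑ x ∈ D, (D.filter (fun y => G.Adj x y ∧ r y = r x + 1)).card +
        ∑ x ∈ D, ((G.neighborFinset x).filter (fun y => y ∉ D ∧ r y = r x + 1)).card := by
      rw [← Finset.sum_add_distrib]
      exact Finset.sum_congr rfl (fun x _ => by simp only [mPlus]; convert hsplit (fun y => r y = r x + 1) x using 2 <;> first | rfl | (ext y; simp [hr]) | (apply congrArg; ext y; simp [hr]))
    have hM : ∑ x ∈ D, mMinus G x₀ x =
        ∑ x ∈ D, (D.filter (fun y => G.Adj x y ∧ r y + 1 = r x)).card +
        ∑ x ∈ D, ((G.neighborFinset x).filter (fun y => y ∉ D ∧ r y + 1 = r x)).card := by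
      rw [← Finset.sum_add_distrib]
      exact Finset.sum_congr rfl (fun x _ => by simp only [mMinus]; convert hsplit (fun y => r y + 1 = r x) x using 2 <;> first | rfl | (ext y; simp [hr]) | (apply congrArg; ext y; simp [hr]))
    have hout : ∑ x ∈ D, ((G.neighborFinset x).filter (fun y => y ∉ D ∧ r y = r x + 1)).card ≤
        boundaryEdges G D := by
      apply Finset.sum_le_sum
      intro x _
      apply Finset.card_le_card
      intro y hy
      rw [Finset.mem_filter] at hy ⊢
      exact ⟨hy.1, hy.2.1⟩
    rw [hP, hM, hin]
    omega
  -- real version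
  have hmain : c * ∑ x ∈ D, (G.degree x : ℝ) ≤ (boundaryEdges G D : ℝ) := by
    have h1 : c * ∑ x ∈ D, (G.degree x : ℝ) ≤
        ∑ x ∈ D, ((mPlus G x₀ x : ℝ) - (mMinus G x₀ x : ℝ)) := by
      rw [Finset.mul_sum]
      apply Finset.sum_le_sum
      intro x hx
      linarith [hcurv x (hD x hx)]
    have h2 : ∑ x ∈ D, ((mPlus G x₀ x : ℝ) - (mMinus G x₀ x : ℝ)) ≤ (boundaryEdges G D : ℝ) := by
      rw [Finset.sum_sub_distrib]
      have := hnat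
      have h3 : ((∑ x ∈ D, mPlus G x₀ x : ℕ) : ℝ) ≤
          ((∑ x ∈ D, mMinus G x₀ x + boundaryEdges G D : ℕ) : ℝ) := by exact_mod_cast this
      push_cast at h3 ⊢
      linarith
    linarith
  refine ⟨hmain, fun hpos => ?_⟩
  rw [le_div_iff₀ hpos]
  linarith
end
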